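/- arXiv:1501.07045 — 5 statements merged into one kernel-verified Lean document; each statement's English description precedes it below -/
import Mathlib

section
/- Let X and Y be sets and let Γ : ℓ²(X) → ℓ²(X) ⊗ ℓ²(Y) be a bounded operator satisfying: (1) Γ* ∘ Γ = id; (2) (Δ_X ⊗ id) ∘ Γ = (id ⊗ Γ) ∘ Δ_X; (3) (id ⊗ Δ_Y) ∘ Γ = (Γ ⊗ id) ∘ Γ. Then there exists a unique function f : X → Y such that Γ(e_x) = e_x ⊗ e_{f(x)} for all x ∈ X. -/
/-! Write `g = Γ e_x ∈ ℓ²(X × Y)`. Reading off the `(a, (a, y))` coordinates of (2) shows that `g`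
is supported on `{x} × Y`; reading off the `(x, (y₁, y₂))` coordinates of (3) then gives
`g(x, y₂) g(x, y₁) = δ_{y₁ y₂} g(x, y₁)`, so every nonzero value of `y ↦ g(x, y)` equals `1` and
there is at most one of them. By (1), `g ≠ 0`, hence `g = e_{(x, y₀)}`. Each coordinate
computation rests on one fact: an operator sending every `e_i` to `e_{σ i}`, with `σ` injective,
maps `f` to a vector whose `σ i` coordinate is `f i` and which vanishes off the range of `σ`. -/

open scoped ENNReal

namespace lp

variable {𝕜 : Type*} [NormedField 𝕜] {I J : Type*} [DecidableEq I]
  {p q : ℝ≥0∞} [Fact (1 ≤ p)] [Fact (1 ≤ q)]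

theorem hasSum_map_apply (hp : p ≠ ∞) (T : lp (fun _ : I => 𝕜) p →L[𝕜] lp (fun _ : J => 𝕜) q)
    (f : lp (fun _ : I => 𝕜) p) (j : J) :
    HasSum (fun i => f i * T (lp.single p i 1) j) (T f j) := by
  have h := (lp.hasSum_single hp f).mapL ((evalCLM 𝕜 _ q j).comp T)
  have single_eq (i : I) :
      (lp.single p i (f i) : lp (fun _ : I => 𝕜) p) = f i • lp.single p i 1 := by
    rw [← lp.single_smul, smul_eq_mul, mul_one]
  simp only [single_eq, map_smul, smul_eq_mul] at h
  exact h

variable [DecidableEq J] {T : lp (fun _ : I => 𝕜) p →L[𝕜] lp (fun _ : J => 𝕜) q} {σ : I → J}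

theorem map_apply_of_map_single (hp : p ≠ ∞)
    (hT : ∀ i, T (lp.single p i 1) = lp.single q (σ i) 1) (hσ : σ.Injective)
    (f : lp (fun _ : I => 𝕜) p) (i : I) : T f (σ i) = f i := by
  refine (hasSum_map_apply hp T f (σ i)).unique ?_
  convert hasSum_single i fun i' hi' => ?_ using 1
  · simp [hT]
  · simp [hT, hσ.ne hi']

theorem map_apply_eq_zero_of_map_single (hp : p ≠ ∞)
    (hT : ∀ i, T (lp.single p i 1) = lp.single q (σ i) 1)
    (f : lp (fun _ : I => 𝕜) p) {j : J} (hj : j ∉ Set.range σ) : T f j = 0 := by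
  refine (hasSum_map_apply hp T f j).unique ?_
  simp [hT, fun i => Ne.symm (mt (⟨i, ·⟩) hj)]

end lp

theorem Pi.eq_single_of_mul_eq_ite {Y K : Type*} [DecidableEq Y] [MonoidWithZero K]
    [IsLeftCancelMulZero K]
    {c : Y → K} (hc : ∀ y₁ y₂, c y₂ * c y₁ = if y₁ = y₂ then c y₁ else 0) {y₀ : Y}
    (h₀ : c y₀ ≠ 0) : c = Pi.single y₀ 1 := by
  have hc₀ : c y₀ = 1 := (mul_eq_left₀ h₀).mp (by simpa using hc y₀ y₀)
  funext y
  by_cases hy : y = y₀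
  · simp [hy, hc₀]
  · simpa [hy, hc₀] using hc y y₀

namespace Coaction

variable {𝕜 : Type*} [NormedField 𝕜] {p : ℝ≥0∞} {X Y : Type*} [DecidableEq X] [DecidableEq Y]

local notation "ℓᵖ(" I ")" => lp (fun _ : I => 𝕜) p

theorem exists_eq_single_of_mul_eq_ite {g : ℓᵖ(X × Y)} (hg₀ : g ≠ 0) {x : X}
    (hg : ∀ a ≠ x, ∀ y, g (a, y) = 0)
    (hmul : ∀ y₁ y₂, g (x, y₂) * g (x, y₁) = if y₁ = y₂ then g (x, y₁) else 0) :
    ∃ y₀, g = lp.single p (x, y₀) 1 := by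
  obtain ⟨⟨a, y₀⟩, hy₀⟩ : ∃ i, g i ≠ 0 := by
    by_contra! h
    exact hg₀ (lp.ext (funext h))
  obtain rfl : a = x := by
    by_contra ha
    exact hy₀ (hg a ha y₀)
  have hfiber := Pi.eq_single_of_mul_eq_ite (c := fun y => g (a, y)) hmul hy₀
  refine ⟨y₀, lp.ext (funext fun ⟨b, y⟩ => ?_)⟩
  by_cases hb : b = a
  · subst hb
    simpa [Pi.single_apply] using congrFun hfiber y
  · simp [hg b hb, hb]

variable [Fact (1 ≤ p)]

theorem apply_eq_zero_of_diag_eq (hp : p ≠ ∞) {A ι : ℓᵖ(X × Y) →L[𝕜] ℓᵖ(X × (X × Y))}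
    (hA : ∀ x y, A (lp.single p (x, y) 1) = lp.single p (x, (x, y)) 1) {x : X}
    (hι : ∀ b y, ι (lp.single p (b, y) 1) = lp.single p (x, (b, y)) 1)
    {g : ℓᵖ(X × Y)} (hg : A g = ι g) : ∀ a ≠ x, ∀ y, g (a, y) = 0 := by
  intro a ha y
  calc g (a, y) = A g (a, (a, y)) :=
        (lp.map_apply_of_map_single (σ := fun i => (i.1, i)) hp (fun i => hA i.1 i.2)
          (fun i j h => (Prod.ext_iff.mp h).2) g (a, y)).symm
    _ = ι g (a, (a, y)) := by rw [hg]
    _ = 0 := lp.map_apply_eq_zero_of_map_single (σ := fun i => (x, i)) hp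
        (fun i => hι i.1 i.2) g (by simpa using Ne.symm ha)

theorem rTensor_apply (hp : p ≠ ∞) {Γ : ℓᵖ(X) →L[𝕜] ℓᵖ(X × Y)}
    {κ : Y → ℓᵖ(X) →L[𝕜] ℓᵖ(X × Y)} {τ : Y → ℓᵖ(X × Y) →L[𝕜] ℓᵖ(X × (Y × Y))}
    {D : ℓᵖ(X × Y) →L[𝕜] ℓᵖ(X × (Y × Y))}
    (hκ : ∀ y x, κ y (lp.single p x 1) = lp.single p (x, y) 1)
    (hτ : ∀ y x y₁, τ y (lp.single p (x, y₁) 1) = lp.single p (x, (y₁, y)) 1)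
    (hD : ∀ y v, D (κ y v) = τ y (Γ v)) {x : X} {g : ℓᵖ(X × Y)}
    (hg : ∀ a ≠ x, ∀ y, g (a, y) = 0) (y₁ y₂ : Y) :
    D g (x, (y₁, y₂)) = g (x, y₂) * Γ (lp.single p x 1) (x, y₁) := by
  refine (lp.hasSum_map_apply hp D g _).unique ?_
  convert hasSum_single (x, y₂) fun i hi => ?_ using 1
  · rw [← hκ, hD]
    exact congrArg _ (lp.map_apply_of_map_single (σ := fun i : X × Y => (i.1, (i.2, y₂))) hp
      (fun i => hτ y₂ i.1 i.2) (fun i j h => by simpa [Prod.ext_iff] using h) _ (x, y₁)).symm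
  · obtain ⟨b, y⟩ := i
    by_cases hb : b = x
    · subst hb
      have hy : y ≠ y₂ := fun h => hi (by rw [h])
      rw [← hκ, hD, lp.map_apply_eq_zero_of_map_single (σ := fun i : X × Y => (i.1, (i.2, y))) hp
        (fun i => hτ y i.1 i.2) _ (by simpa using hy), mul_zero]
    · rw [hg b hb, zero_mul]

theorem mul_apply_eq_ite (hp : p ≠ ∞) {Γ : ℓᵖ(X) →L[𝕜] ℓᵖ(X × Y)}
    {C D : ℓᵖ(X × Y) →L[𝕜] ℓᵖ(X × (Y × Y))}
    {κ : Y → ℓᵖ(X) →L[𝕜] ℓᵖ(X × Y)} {τ : Y → ℓᵖ(X × Y) →L[𝕜] ℓᵖ(X × (Y × Y))}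
    (hC : ∀ x y, C (lp.single p (x, y) 1) = lp.single p (x, (y, y)) 1)
    (hκ : ∀ y x, κ y (lp.single p x 1) = lp.single p (x, y) 1)
    (hτ : ∀ y x y₁, τ y (lp.single p (x, y₁) 1) = lp.single p (x, (y₁, y)) 1)
    (hD : ∀ y v, D (κ y v) = τ y (Γ v)) (hCD : C ∘L Γ = D ∘L Γ) {x : X}
    (hΓx : ∀ a ≠ x, ∀ y, Γ (lp.single p x 1) (a, y) = 0) (y₁ y₂ : Y) :
    Γ (lp.single p x 1) (x, y₂) * Γ (lp.single p x 1) (x, y₁) =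
      if y₁ = y₂ then Γ (lp.single p x 1) (x, y₁) else 0 := by
  have hCDx : C (Γ (lp.single p x 1)) = D (Γ (lp.single p x 1)) := DFunLike.congr_fun hCD _
  rw [← rTensor_apply hp hκ hτ hD hΓx, ← hCDx]
  split_ifs with h
  · subst h
    exact lp.map_apply_of_map_single (σ := fun i : X × Y => (i.1, (i.2, i.2))) hp
      (fun i => hC i.1 i.2) (fun i j h => by simpa [Prod.ext_iff] using h) _ (x, y₁)
  · exact lp.map_apply_eq_zero_of_map_single (σ := fun i : X × Y => (i.1, (i.2, i.2))) hp
      (fun i => hC i.1 i.2) _ (by simpa using h)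

end Coaction

/-- If a bounded operator `Γ : ℓ²(X) → ℓ²(X) ⊗ ℓ²(Y) ≅ ℓ²(X × Y)`
satisfies `Γ*Γ = id`, `(Δ_X ⊗ id) ∘ Γ = (id ⊗ Γ) ∘ Δ_X` and
`(id ⊗ Δ_Y) ∘ Γ = (Γ ⊗ id) ∘ Γ`, then there is a unique `f : X → Y` with
`Γ(e_x) = e_x ⊗ e_{f(x)}` for all `x`.  The operators `id ⊗ Γ` and `Γ ⊗ id`
are specified through the isometric embeddings `ι a = e_a ⊗ -`, `κ y = - ⊗ e_y`
and their analogues on the larger spaces. -/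
theorem stmt_7 {X Y : Type} [DecidableEq X] [DecidableEq Y]
    (Γ : lp (fun _ : X => ℂ) 2 →L[ℂ] lp (fun _ : X × Y => ℂ) 2)
    (ΔX : lp (fun _ : X => ℂ) 2 →L[ℂ] lp (fun _ : X × X => ℂ) 2)
    (hΔX : ∀ x : X, ΔX (lp.single 2 x 1) = lp.single 2 (x, x) 1)
    -- (1) `Γ* ∘ Γ = id`
    (h1 : ContinuousLinearMap.adjoint Γ ∘L Γ =
      ContinuousLinearMap.id ℂ (lp (fun _ : X => ℂ) 2))
    -- `Δ_X ⊗ id_{ℓ²(Y)} : ℓ²(X × Y) → ℓ²(X × (X × Y))`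
    (A : lp (fun _ : X × Y => ℂ) 2 →L[ℂ] lp (fun _ : X × (X × Y) => ℂ) 2)
    (hA : ∀ (x : X) (y : Y),
      A (lp.single 2 (x, y) 1) = lp.single 2 (x, (x, y)) 1)
    -- `e_a ⊗ - : ℓ²(X) → ℓ²(X × X)` and `e_a ⊗ - : ℓ²(X × Y) → ℓ²(X × (X × Y))`
    (ι : X → (lp (fun _ : X => ℂ) 2 →L[ℂ] lp (fun _ : X × X => ℂ) 2))
    (hι : ∀ a b : X, ι a (lp.single 2 b 1) = lp.single 2 (a, b) 1)
    (ι' : X → (lp (fun _ : X × Y => ℂ) 2 →L[ℂ] lp (fun _ : X × (X × Y) => ℂ) 2))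
    (hι' : ∀ (a b : X) (y : Y),
      ι' a (lp.single 2 (b, y) 1) = lp.single 2 (a, (b, y)) 1)
    -- `B = id_{ℓ²(X)} ⊗ Γ`
    (B : lp (fun _ : X × X => ℂ) 2 →L[ℂ] lp (fun _ : X × (X × Y) => ℂ) 2)
    (hB : ∀ (a : X) (v : lp (fun _ : X => ℂ) 2), B (ι a v) = ι' a (Γ v))
    -- (2) `(Δ_X ⊗ id) ∘ Γ = (id ⊗ Γ) ∘ Δ_X`
    (h2 : A ∘L Γ = B ∘L ΔX)
    -- `id_{ℓ²(X)} ⊗ Δ_Y : ℓ²(X × Y) → ℓ²(X × (Y × Y))`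
    (C : lp (fun _ : X × Y => ℂ) 2 →L[ℂ] lp (fun _ : X × (Y × Y) => ℂ) 2)
    (hC : ∀ (x : X) (y : Y),
      C (lp.single 2 (x, y) 1) = lp.single 2 (x, (y, y)) 1)
    -- `- ⊗ e_y : ℓ²(X) → ℓ²(X × Y)` and `- ⊗ e_y : ℓ²(X × Y) → ℓ²(X × (Y × Y))`
    (κ : Y → (lp (fun _ : X => ℂ) 2 →L[ℂ] lp (fun _ : X × Y => ℂ) 2))
    (hκ : ∀ (y : Y) (x : X), κ y (lp.single 2 x 1) = lp.single 2 (x, y) 1)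
    (τ : Y → (lp (fun _ : X × Y => ℂ) 2 →L[ℂ] lp (fun _ : X × (Y × Y) => ℂ) 2))
    (hτ : ∀ (y : Y) (x : X) (y₁ : Y),
      τ y (lp.single 2 (x, y₁) 1) = lp.single 2 (x, (y₁, y)) 1)
    -- `D = Γ ⊗ id_{ℓ²(Y)}`
    (D : lp (fun _ : X × Y => ℂ) 2 →L[ℂ] lp (fun _ : X × (Y × Y) => ℂ) 2)
    (hD : ∀ (y : Y) (v : lp (fun _ : X => ℂ) 2), D (κ y v) = τ y (Γ v))
    -- (3) `(id ⊗ Δ_Y) ∘ Γ = (Γ ⊗ id) ∘ Γ`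
    (h3 : C ∘L Γ = D ∘L Γ) :
    ∃! f : X → Y, ∀ x : X, Γ (lp.single 2 x 1) = lp.single 2 (x, f x) 1 := by
  have hΓ : ∀ x, ∃ y, Γ (lp.single 2 x 1) = lp.single 2 (x, y) 1 := by
    intro x
    have hΓx : ∀ a ≠ x, ∀ y, Γ (lp.single 2 x 1) (a, y) = 0 := by
      refine Coaction.apply_eq_zero_of_diag_eq ENNReal.ofNat_ne_top hA (hι' x) ?_
      rw [← hB, hι, ← hΔX]
      exact DFunLike.congr_fun h2 _
    have hΓx₀ : Γ (lp.single 2 x 1) ≠ 0 := by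
      intro h
      have hx := congrArg (fun v : lp (fun _ : X => ℂ) 2 => v x)
        (DFunLike.congr_fun h1 (lp.single 2 x 1))
      simp [h] at hx
    exact Coaction.exists_eq_single_of_mul_eq_ite hΓx₀ hΓx
      (Coaction.mul_apply_eq_ite ENNReal.ofNat_ne_top hC hκ hτ hD h3 hΓx)
  choose f hf using hΓ
  refine ⟨f, hf, fun f' hf' => funext fun x => ?_⟩
  simpa [Pi.single_apply] using congrFun (congrArg (⇑) ((hf' x).symm.trans (hf x))) (x, f' x)
end

section
/- In the setting of a Hilbert space H with isometric comultiplication Δ : H → H ⊗ H (Δ* Δ = id) defining the product a*b = Δ*(a⊗b), let χ be a character of the C*-algebra C generated by multiplication operators, with associated vector e_χ ∈ H satisfying ⟨e_χ, h⟩ = χ(m_h) for all h. Then: (1) Δ(e_χ) = e_χ ⊗ e_χ; (2) e_χ * e_χ = e_χ; (3) e_χ * h = χ(m_h)·e_χ for all h ∈ H; (4) ‖e_χ‖ = 1. -/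
/-!
Pairing with `e` is multiplicative, i.e. `⟪Δ e, a ⊗ b⟫ = ⟪e ⊗ e, a ⊗ b⟫`, so density of the
elementary tensors gives `Δ e = e ⊗ e`. Applying `Δ*` yields `e * e = e`, and then `⟪e, e⟫` is a
nonzero idempotent scalar, hence `1`. For `v = e * h` we have `e * v = v`, so
`‖Δ* (e ⊗ v)‖ = ‖v‖ = ‖e ⊗ v‖`; as `Δ Δ*` is the orthogonal projection onto the range of `Δ`, this
forces `Δ v = e ⊗ v`. Together with commutativity this gives `⟪v, a⟫ = ⟪v, e⟫ ⟪e, a⟫` for all `a`,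
so `v` is a multiple of `e`, and the coefficient is `⟪e, v⟫ = ⟪e, h⟫ = χ(m_h)`.
-/

open scoped InnerProductSpace
open RCLike ContinuousLinearMap

section

variable {𝕜 H T : Type*} [RCLike 𝕜]
  [NormedAddCommGroup H] [InnerProductSpace 𝕜 H] [NormedAddCommGroup T] [InnerProductSpace 𝕜 T]

/-- `T` is the Hilbert tensor product `H ⊗ H`, with `tm a b` playing the role of `a ⊗ b`. -/
structure IsHilbertTensorSquare (tm : H →L[𝕜] H →L[𝕜] T) : Prop where
  inner_apply_apply : ∀ a b c d : H, ⟪tm a b, tm c d⟫_𝕜 = ⟪a, c⟫_𝕜 * ⟪b, d⟫_𝕜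
  span_dense : (Submodule.span 𝕜 (Set.range fun p : H × H => tm p.1 p.2)).topologicalClosure = ⊤

theorem IsHilbertTensorSquare.norm_apply_apply {tm : H →L[𝕜] H →L[𝕜] T}
    (htm : IsHilbertTensorSquare tm) (a b : H) : ‖tm a b‖ = ‖a‖ * ‖b‖ := by
  have h := htm.inner_apply_apply a b a b
  simp only [inner_self_eq_norm_sq_to_K] at h
  exact (pow_left_inj₀ (norm_nonneg _) (by positivity) two_ne_zero).mp
    (by exact_mod_cast h.trans (mul_pow _ _ _).symm)

theorem norm_eq_one_of_mul_self_eq {mul : H →L[𝕜] H →L[𝕜] H} {e : H} (he : e ≠ 0)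
    (hchar : ∀ a b : H, ⟪e, mul a b⟫_𝕜 = ⟪e, a⟫_𝕜 * ⟪e, b⟫_𝕜) (hee : mul e e = e) : ‖e‖ = 1 := by
  have hidem : ⟪e, e⟫_𝕜 * ⟪e, e⟫_𝕜 = ⟪e, e⟫_𝕜 := by rw [← hchar, hee]
  have hone : ⟪e, e⟫_𝕜 = 1 := (mul_eq_right₀ (inner_self_ne_zero.mpr he)).mp hidem
  rw [inner_self_eq_norm_sq_to_K] at hone
  exact (pow_eq_one_iff_of_nonneg (norm_nonneg e) two_ne_zero).mp (by exact_mod_cast hone)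

variable [CompleteSpace H] [CompleteSpace T]

theorem ContinuousLinearMap.apply_adjoint_apply_eq_of_norm_eq {V : H →L[𝕜] T}
    (hV : adjoint V ∘L V = 1) {t : T} (ht : ‖adjoint V t‖ = ‖t‖) : V (adjoint V t) = t := by
  have hnorm : ‖V (adjoint V t)‖ = ‖adjoint V t‖ := V.norm_map_iff_adjoint_comp_self.mpr hV _
  have hre : re ⟪t, V (adjoint V t)⟫_𝕜 = ‖adjoint V t‖ ^ 2 := by
    rw [← adjoint_inner_left, inner_self_eq_norm_sq_to_K]
    norm_cast
  have hsq : ‖t - V (adjoint V t)‖ ^ 2 = 0 := by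
    rw [norm_sub_sq (𝕜 := 𝕜), hre, hnorm, ht]
    ring
  exact (sub_eq_zero.mp (norm_eq_zero.mp (pow_eq_zero_iff two_ne_zero |>.mp hsq))).symm

variable {tm : H →L[𝕜] H →L[𝕜] T} {Δ : H →L[𝕜] T} {mul : H →L[𝕜] H →L[𝕜] H}

theorem comul_eq_tm_iff (htm : IsHilbertTensorSquare tm)
    (hmulΔ : ∀ a b : H, mul a b = adjoint Δ (tm a b)) {x v w : H} :
    Δ x = tm v w ↔ ∀ a b : H, ⟪x, mul a b⟫_𝕜 = ⟪v, a⟫_𝕜 * ⟪w, b⟫_𝕜 := by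
  simp only [hmulΔ, adjoint_inner_right, ← htm.inner_apply_apply]
  refine ⟨fun h a b => by rw [h], fun h => (innerSL_inj (𝕜 := 𝕜)).mp <|
    ext_on (Submodule.dense_iff_topologicalClosure_eq_top.mpr htm.span_dense) ?_⟩
  rintro _ ⟨⟨a, b⟩, rfl⟩
  exact h a b

theorem comul_eq_tm_of_mul_eq (htm : IsHilbertTensorSquare tm) (hiso : adjoint Δ ∘L Δ = 1)
    (hmulΔ : ∀ a b : H, mul a b = adjoint Δ (tm a b)) {e v : H} (he : ‖e‖ = 1)
    (hv : mul e v = v) : Δ v = tm e v := by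
  have hadj : adjoint Δ (tm e v) = v := by rw [← hmulΔ, hv]
  calc Δ v = Δ (adjoint Δ (tm e v)) := by rw [hadj]
    _ = tm e v := Δ.apply_adjoint_apply_eq_of_norm_eq hiso <| by
      rw [hadj, htm.norm_apply_apply, he, one_mul]

theorem eq_inner_smul_of_mul_eq (htm : IsHilbertTensorSquare tm) (hiso : adjoint Δ ∘L Δ = 1)
    (hmulΔ : ∀ a b : H, mul a b = adjoint Δ (tm a b)) (hcomm : ∀ a b : H, mul a b = mul b a)
    {e v : H} (he : ‖e‖ = 1) (hv : mul e v = v) : v = ⟪e, v⟫_𝕜 • e := by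
  have hmul : ∀ a b : H, ⟪v, mul a b⟫_𝕜 = ⟪e, a⟫_𝕜 * ⟪v, b⟫_𝕜 :=
    (comul_eq_tm_iff htm hmulΔ).mp (comul_eq_tm_of_mul_eq htm hiso hmulΔ he hv)
  have hee : ⟪e, e⟫_𝕜 = 1 := by simp [inner_self_eq_norm_sq_to_K, he]
  refine ext_inner_right 𝕜 fun a => ?_
  calc ⟪v, a⟫_𝕜 = ⟪v, mul e a⟫_𝕜 := by rw [hmul, hee, one_mul]
    _ = ⟪v, mul a e⟫_𝕜 := by rw [hcomm]
    _ = ⟪⟪e, v⟫_𝕜 • e, a⟫_𝕜 := by rw [hmul, inner_smul_left, inner_conj_symm, mul_comm]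

end

theorem stmt_11_general {H T : Type}
    [NormedAddCommGroup H] [InnerProductSpace ℂ H] [CompleteSpace H]
    [NormedAddCommGroup T] [InnerProductSpace ℂ T] [CompleteSpace T]
    (tm : H →L[ℂ] H →L[ℂ] T)
    (htm : ∀ a b c d : H,
      (inner ℂ (tm a b) (tm c d) : ℂ) = (inner ℂ a c : ℂ) * (inner ℂ b d : ℂ))
    (hdense :
      (Submodule.span ℂ (Set.range fun p : H × H => tm p.1 p.2)).topologicalClosure = ⊤)
    (Δ : H →L[ℂ] T)
    (hiso : ContinuousLinearMap.adjoint Δ ∘L Δ = ContinuousLinearMap.id ℂ H)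
    (mul : H →L[ℂ] H →L[ℂ] H)
    (hmulΔ : ∀ a b : H, mul a b = ContinuousLinearMap.adjoint Δ (tm a b))
    (hcomm : ∀ a b : H, mul a b = mul b a)
    (hassoc : ∀ a b c : H, mul (mul a b) c = mul a (mul b c))
    (C : Set (H →L[ℂ] H)) (hC : C = closure (Set.range fun h : H => mul h))
    (χ : (H →L[ℂ] H) → ℂ)
    (hχmul : ∀ f ∈ C, ∀ g ∈ C, χ (f * g) = χ f * χ g)
    (hg : ∃ g : H, χ (mul g) = 1)
    (eχ : H) (heχ : ∀ h : H, (inner ℂ eχ h : ℂ) = χ (mul h)) :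
    Δ eχ = tm eχ eχ ∧
    mul eχ eχ = eχ ∧
    (∀ h : H, mul eχ h = χ (mul h) • eχ) ∧
    ‖eχ‖ = 1 := by
  have hmem : ∀ a : H, mul a ∈ C := fun a => hC ▸ subset_closure ⟨a, rfl⟩
  have hchar : ∀ a b : H, ⟪eχ, mul a b⟫_ℂ = ⟪eχ, a⟫_ℂ * ⟪eχ, b⟫_ℂ := by
    intro a b
    have hop : mul (mul a b) = mul a * mul b := by ext c; simp [hassoc]
    rw [heχ, heχ, heχ, hop, hχmul _ (hmem a) _ (hmem b)]
  have he0 : eχ ≠ 0 := by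
    rintro rfl
    obtain ⟨g, hg⟩ := hg
    simp [← heχ] at hg
  have hT : IsHilbertTensorSquare tm := ⟨htm, hdense⟩
  have hcomul : Δ eχ = tm eχ eχ := (comul_eq_tm_iff hT hmulΔ).mpr hchar
  have hidem : mul eχ eχ = eχ := by rw [hmulΔ, ← hcomul]; exact DFunLike.congr_fun hiso eχ
  have hnorm : ‖eχ‖ = 1 := norm_eq_one_of_mul_self_eq he0 hchar hidem
  refine ⟨hcomul, hidem, fun h => ?_, hnorm⟩
  have hfix : mul eχ (mul eχ h) = mul eχ h := by rw [← hassoc, hidem]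
  rw [eq_inner_smul_of_mul_eq hT hiso hmulΔ hcomm hnorm hfix, hchar, ← heχ]
  simp [inner_self_eq_norm_sq_to_K, hnorm]

/-- Let `H` be a Hilbert space with an isometric comultiplication
`Δ : H → H ⊗ H` (the Hilbert tensor product `H ⊗ H` being axiomatized as a
Hilbert space `T` with a bilinear map `tm` with dense range span and the
characteristic inner-product identity), defining the product
`a * b = Δ*(a ⊗ b)`.  If `χ` is a character of the C*-algebra `C` generated by
the multiplication operators, with associated vector `e_χ` satisfying
`⟨e_χ, h⟩ = χ(m_h)`, then: (1) `Δ(e_χ) = e_χ ⊗ e_χ`; (2) `e_χ * e_χ = e_χ`;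
(3) `e_χ * h = χ(m_h)·e_χ`; (4) `‖e_χ‖ = 1`. -/
theorem stmt_11 {H T : Type}
    [NormedAddCommGroup H] [InnerProductSpace ℂ H] [CompleteSpace H]
    [NormedAddCommGroup T] [InnerProductSpace ℂ T] [CompleteSpace T]
    (tm : H →L[ℂ] H →L[ℂ] T)
    (htm : ∀ a b c d : H,
      (inner ℂ (tm a b) (tm c d) : ℂ) = (inner ℂ a c : ℂ) * (inner ℂ b d : ℂ))
    (hdense :
      (Submodule.span ℂ (Set.range fun p : H × H => tm p.1 p.2)).topologicalClosure = ⊤)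
    (Δ : H →L[ℂ] T)
    (hiso : ContinuousLinearMap.adjoint Δ ∘L Δ = ContinuousLinearMap.id ℂ H)
    (mul : H →L[ℂ] H →L[ℂ] H)
    (hmulΔ : ∀ a b : H, mul a b = ContinuousLinearMap.adjoint Δ (tm a b))
    (hcomm : ∀ a b : H, mul a b = mul b a)
    (hassoc : ∀ a b c : H, mul (mul a b) c = mul a (mul b c))
    (C : Set (H →L[ℂ] H)) (hC : C = closure (Set.range fun h : H => mul h))
    (χ : (H →L[ℂ] H) → ℂ)
    (hχadd : ∀ f ∈ C, ∀ g ∈ C, χ (f + g) = χ f + χ g)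
    (hχsmul : ∀ (c : ℂ), ∀ f ∈ C, χ (c • f) = c * χ f)
    (hχmul : ∀ f ∈ C, ∀ g ∈ C, χ (f * g) = χ f * χ g)
    (hχstar : ∀ f ∈ C, χ (star f) = starRingEnd ℂ (χ f))
    (hχcont : ContinuousOn χ C)
    (hg : ∃ g : H, χ (mul g) = 1)
    (eχ : H) (heχ : ∀ h : H, (inner ℂ eχ h : ℂ) = χ (mul h)) :
    Δ eχ = tm eχ eχ ∧
    mul eχ eχ = eχ ∧
    (∀ h : H, mul eχ h = χ (mul h) • eχ) ∧
    ‖eχ‖ = 1 :=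
  stmt_11_general tm htm hdense Δ hiso mul hmulΔ hcomm hassoc C hC χ hχmul hg eχ heχ
end

section
/- With notation as above, if χ₁ and χ₂ are two characters of C with associated idempotent unit vectors e_{χ₁}, e_{χ₂} (satisfying Δ(e_{χᵢ}) = e_{χᵢ} ⊗ e_{χᵢ} and ‖e_{χᵢ}‖ = 1), then ⟨e_{χ₁}, e_{χ₂}⟩ ∈ {0, 1}, and ⟨e_{χ₁}, e_{χ₂}⟩ = 1 if and only if χ₁ = χ₂. In particular distinct characters give orthogonal vectors e_χ. -/
/-!
Since `Δ` preserves inner products and maps each `eᵢ` to `eᵢ ⊗ eᵢ`, the number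
`⟪e₁, e₂⟫ = ⟪e₁ ⊗ e₁, e₂ ⊗ e₂⟫ = ⟪e₁, e₂⟫²` is idempotent, hence `0` or `1`; for unit vectors
it is `1` exactly when `e₁ = e₂`. By the Riesz-type relation `⟪eᵢ, h⟫ = χᵢ(m_h)`, `e₁ = e₂` means
that `χ₁` and `χ₂` agree on the multiplication operators, hence, by continuity, on their closure `C`.
-/

open Set

variable {𝕜 E : Type*} [RCLike 𝕜] [NormedAddCommGroup E] [InnerProductSpace 𝕜 E]

local notation "⟪" x ", " y "⟫" => inner 𝕜 x y

theorem isIdempotentElem_inner_of_grouplike {F : Type*} [NormedAddCommGroup F]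
    [InnerProductSpace 𝕜 F] (tm : E → E → F)
    (htm : ∀ a b c d : E, ⟪tm a b, tm c d⟫ = ⟪a, c⟫ * ⟪b, d⟫)
    (Δ : E → F) (hΔ : ∀ x y : E, ⟪Δ x, Δ y⟫ = ⟪x, y⟫) {x y : E}
    (hx : Δ x = tm x x) (hy : Δ y = tm y y) :
    IsIdempotentElem ⟪x, y⟫ := by
  rw [IsIdempotentElem, ← htm, ← hx, ← hy, hΔ]

theorem eqOn_closure_range_iff_eq_of_inner_eq {X : Type*} [TopologicalSpace X] (m : E → X)
    {χ₁ χ₂ : X → 𝕜} (hχ₁ : ContinuousOn χ₁ (closure (range m)))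
    (hχ₂ : ContinuousOn χ₂ (closure (range m))) {e₁ e₂ : E}
    (he₁ : ∀ h : E, ⟪e₁, h⟫ = χ₁ (m h)) (he₂ : ∀ h : E, ⟪e₂, h⟫ = χ₂ (m h)) :
    EqOn χ₁ χ₂ (closure (range m)) ↔ e₁ = e₂ := by
  constructor
  · intro hχ
    refine ext_inner_right 𝕜 fun h => ?_
    rw [he₁, he₂, hχ (subset_closure (mem_range_self h))]
  · rintro rfl
    have hrange : EqOn χ₁ χ₂ (range m) := by
      rintro _ ⟨h, rfl⟩
      rw [← he₁, ← he₂]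
    exact hrange.of_subset_closure hχ₁ hχ₂ subset_closure subset_rfl

theorem stmt_12_general {H T : Type}
    [NormedAddCommGroup H] [InnerProductSpace ℂ H] [CompleteSpace H]
    [NormedAddCommGroup T] [InnerProductSpace ℂ T] [CompleteSpace T]
    (tm : H →L[ℂ] H →L[ℂ] T)
    (htm : ∀ a b c d : H,
      (inner ℂ (tm a b) (tm c d) : ℂ) = (inner ℂ a c : ℂ) * (inner ℂ b d : ℂ))
    (Δ : H →L[ℂ] T)
    (hiso : ContinuousLinearMap.adjoint Δ ∘L Δ = ContinuousLinearMap.id ℂ H)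
    (mul : H →L[ℂ] H →L[ℂ] H)
    (C : Set (H →L[ℂ] H)) (hC : C = closure (Set.range fun h : H => mul h))
    (χ₁ χ₂ : (H →L[ℂ] H) → ℂ)
    (hχ₁cont : ContinuousOn χ₁ C)
    (hχ₂cont : ContinuousOn χ₂ C)
    (e₁ e₂ : H)
    (he₁ : ∀ h : H, (inner ℂ e₁ h : ℂ) = χ₁ (mul h))
    (he₂ : ∀ h : H, (inner ℂ e₂ h : ℂ) = χ₂ (mul h))
    (hgl₁ : Δ e₁ = tm e₁ e₁) (hgl₂ : Δ e₂ = tm e₂ e₂)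
    (hn₁ : ‖e₁‖ = 1) (hn₂ : ‖e₂‖ = 1) :
    ((inner ℂ e₁ e₂ : ℂ) = 0 ∨ (inner ℂ e₁ e₂ : ℂ) = 1) ∧
    ((inner ℂ e₁ e₂ : ℂ) = 1 ↔ Set.EqOn χ₁ χ₂ C) := by
  subst hC
  rw [eqOn_closure_range_iff_eq_of_inner_eq (fun h : H => mul h) hχ₁cont hχ₂cont he₁ he₂,
    ← inner_eq_one_iff_of_norm_eq_one (𝕜 := ℂ) hn₁ hn₂]
  have hΔ := Δ.inner_map_map_iff_adjoint_comp_self.mpr hiso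
  exact ⟨IsIdempotentElem.iff_eq_zero_or_one.mp
    (isIdempotentElem_inner_of_grouplike (fun a b => tm a b) htm Δ hΔ hgl₁ hgl₂), Iff.rfl⟩

/-- In the setting of a Hilbert space `H` with isometric
comultiplication `Δ` and product `a*b = Δ*(a⊗b)`, if `χ₁, χ₂` are two
characters of the C*-algebra `C` generated by the multiplication operators,
with associated grouplike unit vectors `e₁, e₂` (`Δ(eᵢ) = eᵢ ⊗ eᵢ`,
`eᵢ * eᵢ = eᵢ`, `‖eᵢ‖ = 1`, `⟨eᵢ, h⟩ = χᵢ(m_h)`), then `⟨e₁, e₂⟩ ∈ {0, 1}`,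
and `⟨e₁, e₂⟩ = 1` iff `χ₁ = χ₂` on `C`; in particular distinct characters
give orthogonal vectors. -/
theorem stmt_12 {H T : Type}
    [NormedAddCommGroup H] [InnerProductSpace ℂ H] [CompleteSpace H]
    [NormedAddCommGroup T] [InnerProductSpace ℂ T] [CompleteSpace T]
    (tm : H →L[ℂ] H →L[ℂ] T)
    (htm : ∀ a b c d : H,
      (inner ℂ (tm a b) (tm c d) : ℂ) = (inner ℂ a c : ℂ) * (inner ℂ b d : ℂ))
    (hdense :
      (Submodule.span ℂ (Set.range fun p : H × H => tm p.1 p.2)).topologicalClosure = ⊤)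
    (Δ : H →L[ℂ] T)
    (hiso : ContinuousLinearMap.adjoint Δ ∘L Δ = ContinuousLinearMap.id ℂ H)
    (mul : H →L[ℂ] H →L[ℂ] H)
    (hmulΔ : ∀ a b : H, mul a b = ContinuousLinearMap.adjoint Δ (tm a b))
    (hcomm : ∀ a b : H, mul a b = mul b a)
    (hassoc : ∀ a b c : H, mul (mul a b) c = mul a (mul b c))
    (C : Set (H →L[ℂ] H)) (hC : C = closure (Set.range fun h : H => mul h))
    (χ₁ χ₂ : (H →L[ℂ] H) → ℂ)
    (hχ₁add : ∀ f ∈ C, ∀ g ∈ C, χ₁ (f + g) = χ₁ f + χ₁ g)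
    (hχ₁smul : ∀ (c : ℂ), ∀ f ∈ C, χ₁ (c • f) = c * χ₁ f)
    (hχ₁mul : ∀ f ∈ C, ∀ g ∈ C, χ₁ (f * g) = χ₁ f * χ₁ g)
    (hχ₁cont : ContinuousOn χ₁ C)
    (hχ₂add : ∀ f ∈ C, ∀ g ∈ C, χ₂ (f + g) = χ₂ f + χ₂ g)
    (hχ₂smul : ∀ (c : ℂ), ∀ f ∈ C, χ₂ (c • f) = c * χ₂ f)
    (hχ₂mul : ∀ f ∈ C, ∀ g ∈ C, χ₂ (f * g) = χ₂ f * χ₂ g)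
    (hχ₂cont : ContinuousOn χ₂ C)
    (e₁ e₂ : H)
    (he₁ : ∀ h : H, (inner ℂ e₁ h : ℂ) = χ₁ (mul h))
    (he₂ : ∀ h : H, (inner ℂ e₂ h : ℂ) = χ₂ (mul h))
    (hgl₁ : Δ e₁ = tm e₁ e₁) (hgl₂ : Δ e₂ = tm e₂ e₂)
    (hid₁ : mul e₁ e₁ = e₁) (hid₂ : mul e₂ e₂ = e₂)
    (hn₁ : ‖e₁‖ = 1) (hn₂ : ‖e₂‖ = 1) :
    ((inner ℂ e₁ e₂ : ℂ) = 0 ∨ (inner ℂ e₁ e₂ : ℂ) = 1) ∧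
    ((inner ℂ e₁ e₂ : ℂ) = 1 ↔ Set.EqOn χ₁ χ₂ C) :=
  stmt_12_general tm htm Δ hiso mul C hC χ₁ χ₂ hχ₁cont hχ₂cont e₁ e₂ he₁ he₂ hgl₁ hgl₂ hn₁ hn₂
end

section
/- Let H be a complex Hilbert space with a commutative associative product * satisfying ‖a*b‖ ≤ ‖a‖₂‖b‖₂, and for h ∈ H let ‖h‖_∞ := ‖m_h‖ be the operator norm of multiplication by h. Suppose ‖h‖_∞ > 0. Writing h^{(n)} for the n-th *-power of h, one has q·‖h‖_∞ⁿ ≤ ‖h^{(n+1)}‖₂ ≤ ‖h‖_∞ⁿ·‖h‖₂ for any 0 < q < ‖h‖_∞, and consequently lim_{n→∞} ‖h^{(n+1)}‖₂^{1/n} = ‖h‖_∞. -/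
/-!
Multiplication by `h^{(n+1)}` is the operator `m_hⁿ⁺¹`, so `‖h‖_∞ⁿ⁺¹ = ‖m_hⁿ⁺¹‖ ≤ ‖h^{(n+1)}‖₂`
by submultiplicativity, while `h^{(n+1)} = m_hⁿ h` gives `‖h^{(n+1)}‖₂ ≤ ‖h‖_∞ⁿ ‖h‖₂`.
Taking `n`-th roots, both bounds are `‖h‖_∞ · c^{1/n}` with `c > 0` a constant, and `c^{1/n} → 1`.
-/

open Filter Topology

namespace Real

theorem tendsto_rpow_one_div_natCast {c : ℝ} (hc : 0 < c) :
    Tendsto (fun n : ℕ => c ^ ((1 : ℝ) / n)) atTop (𝓝 1) := by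
  simpa using tendsto_const_nhds.rpow tendsto_one_div_atTop_nhds_zero_nat (Or.inl hc.ne')

theorem pow_mul_rpow_one_div {a c : ℝ} (ha : 0 ≤ a) (hc : 0 ≤ c) {n : ℕ} (hn : n ≠ 0) :
    (a ^ n * c) ^ ((1 : ℝ) / n) = a * c ^ ((1 : ℝ) / n) := by
  rw [mul_rpow (pow_nonneg ha n) hc, one_div, pow_rpow_inv_natCast ha hn]

theorem tendsto_rpow_one_div_of_pow_succ_le_of_le_pow_mul {a b : ℝ} {x : ℕ → ℝ}
    (ha : 0 < a) (hb : 0 < b) (hlow : ∀ n, a ^ (n + 1) ≤ x n) (hup : ∀ n, x n ≤ a ^ n * b) :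
    Tendsto (fun n : ℕ => x n ^ ((1 : ℝ) / n)) atTop (𝓝 a) := by
  have hlim : ∀ {c : ℝ}, 0 < c → Tendsto (fun n : ℕ => a * c ^ ((1 : ℝ) / n)) atTop (𝓝 a) :=
    fun hc => by simpa using (tendsto_rpow_one_div_natCast hc).const_mul a
  refine tendsto_of_tendsto_of_tendsto_of_le_of_le' (hlim ha) (hlim hb) ?_ ?_ <;>
    filter_upwards [eventually_ne_atTop 0] with n hn
  · rw [← pow_mul_rpow_one_div ha.le ha.le hn, ← pow_succ]
    exact rpow_le_rpow (by positivity) (hlow n) (by positivity)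
  · rw [← pow_mul_rpow_one_div ha.le hb.le hn]
    exact rpow_le_rpow ((pow_pos ha _).le.trans (hlow n)) (hup n) (by positivity)

end Real

namespace ContinuousLinearMap

variable {𝕜 E : Type*} [NontriviallyNormedField 𝕜] [NormedAddCommGroup E] [NormedSpace 𝕜 E]

theorem eq_pow_apply_one_of_succ_eq {f : E →L[𝕜] E} {p : ℕ → E}
    (hps : ∀ n, p (n + 1) = f (p n)) (n : ℕ) : p (n + 1) = (f ^ n) (p 1) := by
  induction n with
  | zero => rfl
  | succ k ih => rw [hps, ih, pow_succ', mul_apply_eq_comp]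

theorem opNorm_le_of_norm_mul_le {mul : E →L[𝕜] E →L[𝕜] E}
    (hsubmult : ∀ a b : E, ‖mul a b‖ ≤ ‖a‖ * ‖b‖) (a : E) : ‖mul a‖ ≤ ‖a‖ :=
  opNorm_le_bound _ (norm_nonneg a) (hsubmult a)

theorem mul_pow_apply_self {mul : E →L[𝕜] E →L[𝕜] E}
    (hassoc : ∀ a b c : E, mul (mul a b) c = mul a (mul b c)) (h : E) (n : ℕ) :
    mul ((mul h ^ n) h) = mul h ^ (n + 1) := by
  induction n with
  | zero => simp
  | succ k ih =>
    ext u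
    rw [pow_succ' (mul h) k, mul_apply_eq_comp, hassoc, ih, pow_succ' (mul h) (k + 1),
      mul_apply_eq_comp]

end ContinuousLinearMap

open ContinuousLinearMap in
theorem stmt_13_general {H : Type} [NormedAddCommGroup H] [InnerProductSpace ℂ H]
    (mul : H →L[ℂ] H →L[ℂ] H)
    (hassoc : ∀ a b c : H, mul (mul a b) c = mul a (mul b c))
    (hsubmult : ∀ a b : H, ‖mul a b‖ ≤ ‖a‖ * ‖b‖)
    (h : H)
    (hnormpow : ∀ n : ℕ, ‖(mul h) ^ n‖ = ‖mul h‖ ^ n)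
    (hpos : 0 < ‖mul h‖)
    (p : ℕ → H) (hp1 : p 1 = h) (hps : ∀ n : ℕ, p (n + 1) = mul h (p n)) :
    (∀ q : ℝ, 0 < q → q < ‖mul h‖ → ∀ n : ℕ,
      q * ‖mul h‖ ^ n ≤ ‖p (n + 1)‖ ∧ ‖p (n + 1)‖ ≤ ‖mul h‖ ^ n * ‖h‖) ∧
    Tendsto (fun n : ℕ => ‖p (n + 1)‖ ^ ((1 : ℝ) / n)) atTop (nhds ‖mul h‖) := by
  have hp : ∀ n, p (n + 1) = (mul h ^ n) h := fun n => hp1 ▸ eq_pow_apply_one_of_succ_eq hps n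
  have hlow : ∀ n, ‖mul h‖ ^ (n + 1) ≤ ‖p (n + 1)‖ := fun n => by
    rw [← hnormpow, hp, ← mul_pow_apply_self hassoc]
    exact opNorm_le_of_norm_mul_le hsubmult _
  have hup : ∀ n, ‖p (n + 1)‖ ≤ ‖mul h‖ ^ n * ‖h‖ := fun n => by
    rw [hp, ← hnormpow]
    exact le_opNorm _ _
  have hh : 0 < ‖h‖ := hpos.trans_le (opNorm_le_of_norm_mul_le hsubmult h)
  refine ⟨fun q _ hq n => ⟨?_, hup n⟩, Real.tendsto_rpow_one_div_of_pow_succ_le_of_le_pow_mul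
    hpos hh hlow hup⟩
  calc q * ‖mul h‖ ^ n ≤ ‖mul h‖ * ‖mul h‖ ^ n := by gcongr
    _ = ‖mul h‖ ^ (n + 1) := (pow_succ' _ _).symm
    _ ≤ ‖p (n + 1)‖ := hlow n

open Filter in
/-- Let `H` be a Hilbert space with a commutative associative
product `*` satisfying `‖a*b‖ ≤ ‖a‖₂‖b‖₂`, let `‖h‖_∞ = ‖m_h‖` be the
operator norm of multiplication by `h` (assumed to satisfy
`‖m_h^n‖ = ‖m_h‖^n`, as holds in the commutative C*-algebra generated by the
`m_h`), and suppose `‖h‖_∞ > 0`.  Then for the `*`-powers `h^{(n)}` one has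
`q·‖h‖_∞ⁿ ≤ ‖h^{(n+1)}‖₂ ≤ ‖h‖_∞ⁿ·‖h‖₂` for any `0 < q < ‖h‖_∞`, and
`‖h^{(n+1)}‖₂^{1/n} → ‖h‖_∞`. -/
theorem stmt_13 {H : Type} [NormedAddCommGroup H] [InnerProductSpace ℂ H]
    [CompleteSpace H]
    (mul : H →L[ℂ] H →L[ℂ] H)
    (hcomm : ∀ a b : H, mul a b = mul b a)
    (hassoc : ∀ a b c : H, mul (mul a b) c = mul a (mul b c))
    (hsubmult : ∀ a b : H, ‖mul a b‖ ≤ ‖a‖ * ‖b‖)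
    (h : H)
    (hnormpow : ∀ n : ℕ, ‖(mul h) ^ n‖ = ‖mul h‖ ^ n)
    (hpos : 0 < ‖mul h‖)
    (p : ℕ → H) (hp1 : p 1 = h) (hps : ∀ n : ℕ, p (n + 1) = mul h (p n)) :
    (∀ q : ℝ, 0 < q → q < ‖mul h‖ → ∀ n : ℕ,
      q * ‖mul h‖ ^ n ≤ ‖p (n + 1)‖ ∧ ‖p (n + 1)‖ ≤ ‖mul h‖ ^ n * ‖h‖) ∧
    Tendsto (fun n : ℕ => ‖p (n + 1)‖ ^ ((1 : ℝ) / n)) atTop (nhds ‖mul h‖) :=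
  stmt_13_general mul hassoc hsubmult h hnormpow hpos p hp1 hps
end

section
/- Let X and Y be sets and let f : ℓ²(X) → ℓ²(Y) be a bounded operator with matrix coefficients m(x,y) = ⟨e_y, f(e_x)⟩. Then the operator M_m on ℓ²(X) ⊗ ℓ²(Y) ≅ ℓ²(X × Y) of multiplication by the bounded function m satisfies M_m = (id_{ℓ²(X)} ⊗ Δ_Y*) ∘ (id_{ℓ²(X)} ⊗ f ⊗ id_{ℓ²(Y)}) ∘ (Δ_X ⊗ id_{ℓ²(Y)}). -/
/-!
Both sides are bounded, so it suffices to compare them on basis vectors `e_(x,y)`, coordinate by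
coordinate. The coordinate of `Δ_Y* w` at `(x', y')` is `w (x', (y', y'))`, and
`(id ⊗ f ⊗ id) (Δ_X ⊗ id) e_(x,y) = e_x ⊗ f(e_x) ⊗ e_y`, whose coordinate at `(x', (y', y'))`
vanishes unless `(x', y') = (x, y)`, where it is `f(e_x)(y) = m(x, y)`.
-/

namespace lp

variable {ι κ 𝕜 : Type*} [DecidableEq ι] [DecidableEq κ]

section NormedField

variable [NormedField 𝕜] {p : ENNReal} [Fact (1 ≤ p)]

theorem ext_continuousLinearMap_single {F : Type*} [AddCommMonoid F] [Module 𝕜 F]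
    [TopologicalSpace F] [T2Space F] (hp : p ≠ ⊤) {T S : lp (fun _ : ι => 𝕜) p →L[𝕜] F}
    (h : ∀ i, T (lp.single p i 1) = S (lp.single p i 1)) : T = S :=
  lp.ext_continuousLinearMap hp fun i => ContinuousLinearMap.ext_ring (h i)

theorem apply_of_map_single_of_injective (hp : p ≠ ⊤) {g : ι → κ}
    {T : lp (fun _ : ι => 𝕜) p →L[𝕜] lp (fun _ : κ => 𝕜) p}
    (hT : ∀ i, T (lp.single p i 1) = lp.single p (g i) 1) (hg : g.Injective)
    (v : lp (fun _ : ι => 𝕜) p) (i : ι) : T v (g i) = v i := by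
  suffices lp.evalCLM 𝕜 _ p (g i) ∘L T = lp.evalCLM 𝕜 _ p i from congr($this v)
  refine ext_continuousLinearMap_single hp fun j => ?_
  simp [lp.evalCLM, hT, lp.single_apply, Pi.single_apply, hg.eq_iff]

theorem apply_eq_zero_of_map_single (hp : p ≠ ⊤) {g : ι → κ}
    {T : lp (fun _ : ι => 𝕜) p →L[𝕜] lp (fun _ : κ => 𝕜) p}
    (hT : ∀ i, T (lp.single p i 1) = lp.single p (g i) 1) {k : κ} (hk : ∀ i, g i ≠ k)
    (v : lp (fun _ : ι => 𝕜) p) : T v k = 0 := by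
  suffices lp.evalCLM 𝕜 _ p k ∘L T = 0 from congr($this v)
  refine ext_continuousLinearMap_single hp fun j => ?_
  simp [lp.evalCLM, hT, lp.single_apply, (hk j).symm]

end NormedField

theorem adjoint_apply_of_map_single [RCLike 𝕜] {g : ι → κ}
    {T : lp (fun _ : ι => 𝕜) 2 →L[𝕜] lp (fun _ : κ => 𝕜) 2}
    (hT : ∀ i, T (lp.single 2 i 1) = lp.single 2 (g i) 1) (w : lp (fun _ : κ => 𝕜) 2) (i : ι) :
    T.adjoint w i = w (g i) := by
  simpa [hT, lp.inner_single_left] using T.adjoint_inner_right (lp.single 2 i 1) w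

end lp

/-- For a bounded operator `f : ℓ²(X) → ℓ²(Y)` with matrix
coefficients `m(x,y) = ⟨e_y, f(e_x)⟩`, the multiplication operator `M_m` on
`ℓ²(X) ⊗ ℓ²(Y) ≅ ℓ²(X × Y)` satisfies
`M_m = (id ⊗ Δ_Y*) ∘ (id ⊗ f ⊗ id) ∘ (Δ_X ⊗ id)`. -/
theorem stmt_16 {X Y : Type} [DecidableEq X] [DecidableEq Y]
    (f : lp (fun _ : X => ℂ) 2 →L[ℂ] lp (fun _ : Y => ℂ) 2)
    -- the operator of multiplication by the matrix coefficients of `f`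
    (Mm : lp (fun _ : X × Y => ℂ) 2 →L[ℂ] lp (fun _ : X × Y => ℂ) 2)
    (hMm : ∀ (ξ : lp (fun _ : X × Y => ℂ) 2) (x : X) (y : Y),
      Mm ξ (x, y) =
        (inner ℂ (lp.single 2 y (1 : ℂ)) (f (lp.single 2 x 1)) : ℂ) * ξ (x, y))
    -- `Δ_X ⊗ id_{ℓ²(Y)} : ℓ²(X × Y) → ℓ²(X × (X × Y))`
    (A : lp (fun _ : X × Y => ℂ) 2 →L[ℂ] lp (fun _ : X × (X × Y) => ℂ) 2)
    (hA : ∀ (x : X) (y : Y),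
      A (lp.single 2 (x, y) 1) = lp.single 2 (x, (x, y)) 1)
    -- embeddings `e_a ⊗ (-) ⊗ e_c` used to characterize `B = id ⊗ f ⊗ id`
    (emb : X → Y → (lp (fun _ : X => ℂ) 2 →L[ℂ] lp (fun _ : X × (X × Y) => ℂ) 2))
    (hemb : ∀ (a : X) (c : Y) (b : X),
      emb a c (lp.single 2 b 1) = lp.single 2 (a, (b, c)) 1)
    (emb' : X → Y → (lp (fun _ : Y => ℂ) 2 →L[ℂ] lp (fun _ : X × (Y × Y) => ℂ) 2))
    (hemb' : ∀ (a : X) (c : Y) (y : Y),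
      emb' a c (lp.single 2 y 1) = lp.single 2 (a, (y, c)) 1)
    -- `B = id_{ℓ²(X)} ⊗ f ⊗ id_{ℓ²(Y)}`
    (B : lp (fun _ : X × (X × Y) => ℂ) 2 →L[ℂ] lp (fun _ : X × (Y × Y) => ℂ) 2)
    (hB : ∀ (a : X) (c : Y) (v : lp (fun _ : X => ℂ) 2),
      B (emb a c v) = emb' a c (f v))
    -- `id_{ℓ²(X)} ⊗ Δ_Y : ℓ²(X × Y) → ℓ²(X × (Y × Y))`
    (DY : lp (fun _ : X × Y => ℂ) 2 →L[ℂ] lp (fun _ : X × (Y × Y) => ℂ) 2)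
    (hDY : ∀ (x : X) (y : Y),
      DY (lp.single 2 (x, y) 1) = lp.single 2 (x, (y, y)) 1) :
    Mm = ContinuousLinearMap.adjoint DY ∘L B ∘L A := by
  refine lp.ext_continuousLinearMap_single ENNReal.ofNat_ne_top fun ⟨x, y⟩ => ?_
  have hBA : B (A (lp.single 2 (x, y) 1)) = emb' x y (f (lp.single 2 x 1)) := by
    rw [hA, ← hemb, hB]
  ext ⟨x', y'⟩
  rw [ContinuousLinearMap.comp_apply, ContinuousLinearMap.comp_apply, hBA,
    lp.adjoint_apply_of_map_single (g := fun p => (p.1, (p.2, p.2))) (fun p => hDY p.1 p.2), hMm,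
    lp.inner_single_left]
  by_cases hxy : x' = x ∧ y' = y
  · obtain ⟨rfl, rfl⟩ := hxy
    rw [lp.apply_of_map_single_of_injective ENNReal.ofNat_ne_top (hemb' x' y')
      (g := fun b => (x', (b, y'))) (fun _ _ h => by simpa using h)]
    simp
  · rw [lp.apply_eq_zero_of_map_single ENNReal.ofNat_ne_top (hemb' x y)
      (g := fun b => (x, (b, y))) (by grind)]
    simp [lp.single_apply, hxy]
end
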